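/- arXiv:1108.6004 — 2 statements merged into one kernel-verified Lean document; each statement's English description precedes it below -/
import Mathlib

section
/- Let θ_a and θ_a^i (a = 1,…,n; i = 1,…,m) be real-valued functions on the set of regular velocities {(x, u) ∈ ℝ^n × (ℝ^m →ₗ[ℝ] ℝ^n) : u injective}, the components of a 1-form θ = θ_a du^a + θ_a^i du_i^a. Then the following are equivalent: (1) for every smooth map γ : ℝ^m → ℝ^n with Dγ(0) injective, the pullback of θ along the prolongation j¹γ vanishes at 0, i.e. for every k = 1,…,m, Σ_a θ_a(γ(0), Dγ(0)) ∂_kγ^a(0) + Σ_{a,i} θ_a^i(γ(0), Dγ(0)) ∂_i∂_kγ^a(0) = 0; (2) θ is a horizontal contact form, i.e. θ_a^i(x,u) = 0 for all a, i and Σ_a u_k^a θ_a(x,u) = 0 for all k, at every (x,u) with u injective (where u_k^a is the a-th component of u e_k). -/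
/-!
The pullback of `θ` along `j¹γ` at `0` depends only on the 2-jet `(γ 0, Dγ 0, D²γ 0)`, so
(2) ⇒ (1) is immediate. For (1) ⇒ (2), test against the curves `t ↦ x + u t + (t_i)² e_a`, whose
2-jet at `0` is `(x, u, 2 eⁱ ⊗ eⁱ ⊗ e_a)`: without the quadratic term the pullback along `∂/∂t^k`
is `Σ_a u_k^a θ_a`, and the quadratic term adds `2 θ_a^i` to it for `k = i`.
-/

open ContinuousLinearMap
open scoped ContDiff

section QuadraticCurve

variable {𝕜 E F : Type*} [NontriviallyNormedField 𝕜] [NormedAddCommGroup E] [NormedSpace 𝕜 E]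
  [NormedAddCommGroup F] [NormedSpace 𝕜 F]

theorem hasFDerivAt_quadraticCurve (x : F) (u : E →L[𝕜] F) (φ : E →L[𝕜] 𝕜) (v : F) (y : E) :
    HasFDerivAt (fun t => x + u t + (φ t * φ t) • v) (u + (2 * φ y) • φ.smulRight v) y := by
  refine ((u.hasFDerivAt.const_add x).add
    ((φ.hasFDerivAt.mul φ.hasFDerivAt).smul_const v)).congr_fderiv ?_
  ext h
  simp only [add_apply, smul_apply, smulRight_apply, smul_eq_mul]
  module

theorem fderiv_quadraticCurve (x : F) (u : E →L[𝕜] F) (φ : E →L[𝕜] 𝕜) (v : F) :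
    fderiv 𝕜 (fun t => x + u t + (φ t * φ t) • v) = fun y => u + (2 * φ y) • φ.smulRight v :=
  funext fun y => (hasFDerivAt_quadraticCurve x u φ v y).fderiv

theorem contDiff_quadraticCurve (x : F) (u : E →L[𝕜] F) (φ : E →L[𝕜] 𝕜) (v : F) {n : WithTop ℕ∞} :
    ContDiff 𝕜 n (fun t => x + u t + (φ t * φ t) • v) :=
  (contDiff_const.add u.contDiff).add ((φ.contDiff.mul φ.contDiff).smul contDiff_const)

theorem exists_contDiff_two_jet (x : F) (u : E →L[𝕜] F) (φ : E →L[𝕜] 𝕜) (v : F) :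
    ∃ γ : E → F, ContDiff 𝕜 ω γ ∧ γ 0 = x ∧ fderiv 𝕜 γ 0 = u ∧
      fderiv 𝕜 (fderiv 𝕜 γ) 0 = (2 • φ).smulRight (φ.smulRight v) := by
  refine ⟨_, contDiff_quadraticCurve x u φ v, by simp, by simp [fderiv_quadraticCurve], ?_⟩
  rw [fderiv_quadraticCurve]
  refine (((2 • φ).smulRight (φ.smulRight v)).hasFDerivAt.const_add u).congr_of_eventuallyEq
    (Filter.Eventually.of_forall fun y => ?_) |>.fderiv
  ext h
  simp only [add_apply, smul_apply, smulRight_apply]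
  module

end QuadraticCurve

section JetPairing

variable {ι κ : Type*} [Fintype ι] [DecidableEq ι] [Fintype κ]

/-- The pullback `(j¹γ)^*θ (∂/∂t^k)` at `0`, expressed through the 2-jet `(x, u, H)` of `γ` at `0`. -/
noncomputable def jetPairing (θa : (κ → ℝ) × ((ι → ℝ) →L[ℝ] (κ → ℝ)) → κ → ℝ)
    (θai : (κ → ℝ) × ((ι → ℝ) →L[ℝ] (κ → ℝ)) → κ → ι → ℝ) (x : κ → ℝ)
    (u : (ι → ℝ) →L[ℝ] (κ → ℝ)) (H : (ι → ℝ) →L[ℝ] (ι → ℝ) →L[ℝ] (κ → ℝ)) (k : ι) : ℝ :=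
  (∑ a, θa (x, u) a * u (Pi.single k 1) a) +
    ∑ a, ∑ i, θai (x, u) a i * H (Pi.single k 1) (Pi.single i 1) a

variable (θa : (κ → ℝ) × ((ι → ℝ) →L[ℝ] (κ → ℝ)) → κ → ℝ)
  (θai : (κ → ℝ) × ((ι → ℝ) →L[ℝ] (κ → ℝ)) → κ → ι → ℝ) (x : κ → ℝ)
  (u : (ι → ℝ) →L[ℝ] (κ → ℝ))

theorem jetPairing_zero (k : ι) :
    jetPairing θa θai x u 0 k = ∑ a, θa (x, u) a * u (Pi.single k 1) a := by
  simp [jetPairing]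

theorem jetPairing_proj_single [DecidableEq κ] (a : κ) (i : ι) :
    jetPairing θa θai x u
        ((2 • proj i).smulRight ((proj i).smulRight (Pi.single a 1))) i =
      (∑ b, θa (x, u) b * u (Pi.single i 1) b) + 2 * θai (x, u) a i := by
  simp [jetPairing, Pi.single_apply, ite_apply, mul_comm]

theorem jetPairing_eq_zero {H : (ι → ℝ) →L[ℝ] (ι → ℝ) →L[ℝ] (κ → ℝ)} {k : ι}
    (hhor : ∀ a i, θai (x, u) a i = 0) (hcontact : ∑ a, u (Pi.single k 1) a * θa (x, u) a = 0) :
    jetPairing θa θai x u H k = 0 := by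
  simp only [jetPairing, hhor, zero_mul, Finset.sum_const_zero, add_zero]
  simpa only [mul_comm] using hcontact

end JetPairing

/-- Characterisation of contact 1-forms on the regular
velocity manifold `T̊_mℝ^n ≅ {(x,u) : u injective}`. For a 1-form
`θ = θ_a du^a + θ_a^i du_i^a` with component functions `θa`, `θai`, the
following are equivalent:
(1) the pullback of `θ` along the prolongation `j¹γ` of every immersion-at-0
`γ` vanishes at `0`;
(2) `θ` is a horizontal contact form: `θ_a^i = 0` and `Σ_a u_k^a θ_a = 0` at
every regular velocity `(x,u)`. -/
theorem contact_one_form_characterisation (m n : ℕ)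
    (θa : ((Fin n → ℝ) × ((Fin m → ℝ) →L[ℝ] (Fin n → ℝ))) → Fin n → ℝ)
    (θai : ((Fin n → ℝ) × ((Fin m → ℝ) →L[ℝ] (Fin n → ℝ))) → Fin n → Fin m → ℝ) :
    (∀ γ : (Fin m → ℝ) → (Fin n → ℝ), ContDiff ℝ (⊤ : ℕ∞) γ →
      Function.Injective (fderiv ℝ γ 0) →
      ∀ k : Fin m,
        (∑ a, θa (γ 0, fderiv ℝ γ 0) a * fderiv ℝ γ 0 (Pi.single k 1) a) +
          (∑ a, ∑ i, θai (γ 0, fderiv ℝ γ 0) a i *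
            fderiv ℝ (fderiv ℝ γ) 0 (Pi.single k 1) (Pi.single i 1) a) = 0)
    ↔
    (∀ (x : Fin n → ℝ) (u : (Fin m → ℝ) →L[ℝ] (Fin n → ℝ)),
      Function.Injective u →
      (∀ a i, θai (x, u) a i = 0) ∧
      (∀ k, ∑ a, u (Pi.single k 1) a * θa (x, u) a = 0)) := by
  constructor
  · intro h x u hu
    have hjet : ∀ i v k,
        jetPairing θa θai x u ((2 • proj i).smulRight ((proj i).smulRight v)) k = 0 := by
      intro i v k
      obtain ⟨γ, hγ, hγ0, hDγ, hD2γ⟩ := exists_contDiff_two_jet x u (proj i) v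
      have hpull := h γ (hγ.of_le le_top) (hDγ ▸ hu) k
      rwa [hD2γ, hDγ, hγ0] at hpull
    have hcontact : ∀ k, ∑ a, θa (x, u) a * u (Pi.single k 1) a = 0 := fun k => by
      simpa [jetPairing_zero] using hjet k 0 k
    refine ⟨fun a i => ?_, fun k => by simpa only [mul_comm] using hcontact k⟩
    have hquad := hjet i (Pi.single a 1) i
    rw [jetPairing_proj_single, hcontact, zero_add] at hquad
    linarith
  · intro h γ _ hinj k
    obtain ⟨hhor, hcontact⟩ := h _ _ hinj
    exact jetPairing_eq_zero θa θai _ _ hhor (hcontact k)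
end

section
/- Let L : ℝ^n × (ℝ^m →ₗ[ℝ] ℝ^n) → ℝ be smooth, let γ : ℝ^m → ℝ^n be smooth, and let C = [a, b] ⊂ ℝ^m be a closed box with nonempty interior. Say γ is an extremal over C if for every smooth V : ℝ^m → ℝ^n vanishing on the boundary ∂C, ∫_C Σ_a [ (∂L/∂x^a)(j¹γ(t)) V^a(t) + Σ_i (∂L/∂u_i^a)(j¹γ(t)) ∂_iV^a(t) ] dt = 0. Then γ is an extremal over C if and only if the Euler–Lagrange expressions E_a(t) = (∂L/∂x^a)(j¹γ(t)) − Σ_i ∂/∂t^i( (∂L/∂u_i^a)(j¹γ(t)) ) vanish for every a = 1,…,n and every t in the interior of C. -/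
/-!
By the Leibniz rule, the first variation density at `V` equals `Σ_a E_a V^a` plus the divergence
of the vector field `(Σ_a ∂L/∂u_i^a · V^a)_i`. The divergence theorem on the box kills the latter
when `V` vanishes on `∂C`, so the first variation is `∫_C Σ_a E_a V^a`. This is zero when the
`E_a` vanish on the interior; conversely, testing against `V = φ e_a` with `φ` smooth and
compactly supported in the interior, the fundamental lemma of the calculus of variations
forces the continuous function `E_a` to vanish there.
-/

open MeasureTheory

/-- The basis element of the fibre of `T_mℝ^n` corresponding to the fibre
coordinate `u_i^a`: the linear map `ℝ^m → ℝ^n` sending `v ↦ v_i • e_a`. -/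
noncomputable def fibreDir (m n : ℕ) (i : Fin m) (a : Fin n) :
    (Fin m → ℝ) →L[ℝ] (Fin n → ℝ) :=
  (ContinuousLinearMap.proj i : (Fin m → ℝ) →L[ℝ] ℝ).smulRight (Pi.single a 1)

open Set
open scoped ContDiff

theorem integral_divergence_Icc_eq_zero {m : ℕ} {E : Type*}
    [NormedAddCommGroup E] [NormedSpace ℝ E] [CompleteSpace E] (lo hi : Fin m → ℝ)
    (F : Fin m → (Fin m → ℝ) → E) (hF : ∀ i, ContDiff ℝ 1 (F i))
    (hF0 : ∀ i, ∀ t ∈ frontier (Icc lo hi), F i t = 0) :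
    ∫ t in Icc lo hi, ∑ i, fderiv ℝ (F i) t (Pi.single i 1) = 0 := by
  by_cases hle : lo ≤ hi
  swap
  · rw [Icc_eq_empty hle, Measure.restrict_empty, integral_zero_measure]
  obtain _ | m := m
  · simp
  have hface : ∀ i, ∀ c ∈ ({lo i, hi i} : Set ℝ),
      ∀ x ∈ Icc (lo ∘ i.succAbove) (hi ∘ i.succAbove), F i (i.insertNth c x) = 0 := by
    rintro i c hc x hx
    refine hF0 i _ ⟨subset_closure (Fin.insertNth_mem_Icc.2 ⟨?_, hx⟩), fun h => ?_⟩
    · rcases hc with rfl | rfl <;> simp [hle i]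
    · rw [← pi_univ_Icc, interior_pi_set finite_univ] at h
      have := h i (mem_univ i)
      rcases hc with rfl | rfl <;> simp at this
  rw [integral_divergence_of_hasFDerivAt_off_countable' lo hi hle F (fun i => fderiv ℝ (F i)) ∅
    countable_empty (fun i => (hF i).continuous.continuousOn)
    (fun x _ i => ((hF i).differentiable one_ne_zero x).hasFDerivAt)
    (continuous_finsetSum _ fun i _ =>
      ((hF i).continuous_fderiv one_ne_zero).clm_apply continuous_const).integrableOn_Icc]
  refine Finset.sum_eq_zero fun i _ => ?_
  rw [setIntegral_eq_zero_of_forall_eq_zero fun x hx => hface i _ (by simp) x hx,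
    setIntegral_eq_zero_of_forall_eq_zero fun x hx => hface i _ (by simp) x hx, sub_zero]

theorem eqOn_zero_of_setIntegral_contDiff_smul_eq_zero {E F : Type*} [NormedAddCommGroup E]
    [NormedSpace ℝ E] [FiniteDimensional ℝ E] [MeasurableSpace E] [BorelSpace E]
    [NormedAddCommGroup F] [NormedSpace ℝ F] [CompleteSpace F] {μ : Measure E}
    [IsLocallyFiniteMeasure μ] [μ.IsOpenPosMeasure] {s : Set E} {f : E → F}
    (hf : ContinuousOn f (interior s))
    (h : ∀ g : E → ℝ, ContDiff ℝ ∞ g → HasCompactSupport g → tsupport g ⊆ interior s →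
      ∫ x in s, g x • f x ∂μ = 0) :
    EqOn f 0 (interior s) := by
  have hae := isOpen_interior.ae_eq_zero_of_integral_contDiff_smul_eq_zero
    (hf.locallyIntegrableOn measurableSet_interior) fun g hg hgc hgs => by
      rw [← setIntegral_eq_integral_of_forall_compl_eq_zero fun x hx => by
        rw [image_eq_zero_of_notMem_tsupport fun h => hx (interior_subset (hgs h)), zero_smul]]
      exact h g hg hgc hgs
  exact Measure.eqOn_open_of_ae_eq ((ae_restrict_iff' measurableSet_interior).2 hae)
    isOpen_interior hf continuousOn_const

section Lagrangian

variable {m n : ℕ} (L : (Fin n → ℝ) × ((Fin m → ℝ) →L[ℝ] (Fin n → ℝ)) → ℝ)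
  (γ : (Fin m → ℝ) → Fin n → ℝ)

/-- `∂L/∂x^a (j¹γ t)` is `partialAlongJet L γ (Pi.single a 1, 0) t` and `∂L/∂u_i^a (j¹γ t)` is
`partialAlongJet L γ (0, fibreDir m n i a) t`. -/
noncomputable def partialAlongJet (w : (Fin n → ℝ) × ((Fin m → ℝ) →L[ℝ] (Fin n → ℝ)))
    (t : Fin m → ℝ) : ℝ :=
  fderiv ℝ L (γ t, fderiv ℝ γ t) w

noncomputable def eulerLagrange (a : Fin n) (t : Fin m → ℝ) : ℝ :=
  partialAlongJet L γ (Pi.single a 1, 0) t -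
    ∑ i, fderiv ℝ (partialAlongJet L γ (0, fibreDir m n i a)) t (Pi.single i 1)

noncomputable def firstVariationDensity (V : (Fin m → ℝ) → Fin n → ℝ) (t : Fin m → ℝ) : ℝ :=
  ∑ a, (partialAlongJet L γ (Pi.single a 1, 0) t * V t a +
    ∑ i, partialAlongJet L γ (0, fibreDir m n i a) t * fderiv ℝ V t (Pi.single i 1) a)

variable {L γ}

theorem contDiff_partialAlongJet {k : WithTop ℕ∞} (hL : ContDiff ℝ (k + 1) L)
    (hγ : ContDiff ℝ (k + 1) γ) (w : (Fin n → ℝ) × ((Fin m → ℝ) →L[ℝ] (Fin n → ℝ))) :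
    ContDiff ℝ k (partialAlongJet L γ w) :=
  ((hL.fderiv_right le_rfl).comp ((hγ.of_le le_self_add).prodMk
    (hγ.fderiv_right le_rfl))).clm_apply contDiff_const

theorem continuous_eulerLagrange (hL : ContDiff ℝ 2 L) (hγ : ContDiff ℝ 2 γ) (a : Fin n) :
    Continuous (eulerLagrange L γ a) :=
  (contDiff_partialAlongJet (k := 1) hL hγ _).continuous.sub <| continuous_finsetSum _ fun _ _ =>
    ((contDiff_partialAlongJet (k := 1) hL hγ _).continuous_fderiv one_ne_zero).clm_apply
      continuous_const

variable {V : (Fin m → ℝ) → Fin n → ℝ}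

theorem firstVariationDensity_eq {t : Fin m → ℝ}
    (hP : ∀ i a, DifferentiableAt ℝ (partialAlongJet L γ (0, fibreDir m n i a)) t)
    (hV : DifferentiableAt ℝ V t) :
    firstVariationDensity L γ V t = ∑ a, eulerLagrange L γ a t * V t a +
      ∑ a, ∑ i, fderiv ℝ (fun s => partialAlongJet L γ (0, fibreDir m n i a) s * V s a) t
        (Pi.single i 1) := by
  rw [firstVariationDensity, ← Finset.sum_add_distrib]
  refine Finset.sum_congr rfl fun a _ => ?_
  simp only [fderiv_fun_mul (hP _ a) (differentiableAt_pi.1 hV a), fderiv_apply hV a,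
    eulerLagrange, add_apply, smul_apply,
    ContinuousLinearMap.comp_apply, ContinuousLinearMap.proj_apply, smul_eq_mul,
    Finset.sum_add_distrib, ← Finset.mul_sum]
  ring

theorem integral_firstVariationDensity (hL : ContDiff ℝ 2 L) (hγ : ContDiff ℝ 2 γ)
    (hV : ContDiff ℝ 1 V) (lo hi : Fin m → ℝ) (hV0 : ∀ t ∈ frontier (Icc lo hi), V t = 0) :
    ∫ t in Icc lo hi, firstVariationDensity L γ V t =
      ∫ t in Icc lo hi, ∑ a, eulerLagrange L γ a t * V t a := by
  have hP := contDiff_partialAlongJet (k := 1) hL hγ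
  have hVa : ∀ a, ContDiff ℝ 1 fun t => V t a := contDiff_pi.1 hV
  have hPV : ∀ i a, ContDiff ℝ 1 fun s => partialAlongJet L γ (0, fibreDir m n i a) s * V s a :=
    fun i a => (hP _).mul (hVa a)
  have hdiv : ∀ a, IntegrableOn (fun t => ∑ i, fderiv ℝ
      (fun s => partialAlongJet L γ (0, fibreDir m n i a) s * V s a) t (Pi.single i 1))
      (Icc lo hi) := fun a =>
    (continuous_finsetSum _ fun i _ =>
      ((hPV i a).continuous_fderiv one_ne_zero).clm_apply continuous_const).integrableOn_Icc
  have hEV : IntegrableOn (fun t => ∑ a, eulerLagrange L γ a t * V t a) (Icc lo hi) :=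
    (continuous_finsetSum _ fun a _ =>
      (continuous_eulerLagrange hL hγ a).mul (hVa a).continuous).integrableOn_Icc
  simp_rw [firstVariationDensity_eq (fun _ _ => (hP _).differentiable one_ne_zero _)
    (hV.differentiable one_ne_zero _)]
  rw [integral_add hEV (integrable_finsetSum _ fun a _ => hdiv a),
    integral_finsetSum _ fun a _ => hdiv a, Finset.sum_eq_zero, add_zero]
  exact fun a _ => integral_divergence_Icc_eq_zero lo hi _ (fun i => hPV i a)
    fun i t ht => by simp [hV0 t ht]

end Lagrangian

theorem extremal_iff_euler_lagrange_general (m n : ℕ)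
    (L : ((Fin n → ℝ) × ((Fin m → ℝ) →L[ℝ] (Fin n → ℝ))) → ℝ)
    (hL : ContDiff ℝ (⊤ : ℕ∞) L)
    (γ : (Fin m → ℝ) → (Fin n → ℝ)) (hγ : ContDiff ℝ (⊤ : ℕ∞) γ)
    (lo hi : Fin m → ℝ) :
    (∀ V : (Fin m → ℝ) → (Fin n → ℝ), ContDiff ℝ (⊤ : ℕ∞) V →
      (∀ t ∈ frontier (Set.Icc lo hi), V t = 0) →
      (∫ t in Set.Icc lo hi,
        ∑ a, (fderiv ℝ L (γ t, fderiv ℝ γ t) (Pi.single a 1, 0) * V t a +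
          ∑ i, fderiv ℝ L (γ t, fderiv ℝ γ t) (0, fibreDir m n i a) *
            fderiv ℝ V t (Pi.single i 1) a)) = 0)
    ↔
    (∀ (a : Fin n), ∀ t ∈ interior (Set.Icc lo hi),
      fderiv ℝ L (γ t, fderiv ℝ γ t) (Pi.single a 1, 0) -
        (∑ i, fderiv ℝ
          (fun s => fderiv ℝ L (γ s, fderiv ℝ γ s) (0, fibreDir m n i a)) t
          (Pi.single i 1)) = 0) := by
  have hL2 : ContDiff ℝ 2 L := hL.of_le ENat.LEInfty.out
  have hγ2 : ContDiff ℝ 2 γ := hγ.of_le ENat.LEInfty.out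
  constructor
  · intro H a t ht
    refine eqOn_zero_of_setIntegral_contDiff_smul_eq_zero (μ := volume)
      (continuous_eulerLagrange hL2 hγ2 a).continuousOn (fun g hg _ hgs => ?_) ht
    have hV0 : ∀ s ∈ frontier (Icc lo hi), g s • (Pi.single a 1 : Fin n → ℝ) = 0 :=
      fun s hs => by rw [image_eq_zero_of_notMem_tsupport fun h => hs.2 (hgs h), zero_smul]
    have hV : ContDiff ℝ (⊤ : ℕ∞) fun t => g t • (Pi.single a 1 : Fin n → ℝ) :=
      hg.smul contDiff_const
    have hzero := (integral_firstVariationDensity hL2 hγ2 (hV.of_le ENat.LEInfty.out) lo hi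
      hV0).symm.trans (H _ hV hV0)
    simpa [Pi.single_apply, mul_comm] using hzero
  · intro H V hV hV0
    refine (integral_firstVariationDensity hL2 hγ2 (hV.of_le ENat.LEInfty.out) lo hi hV0).trans
      (setIntegral_eq_zero_of_forall_eq_zero fun t ht => Finset.sum_eq_zero fun a _ => ?_)
    by_cases hint : t ∈ interior (Icc lo hi)
    · exact mul_eq_zero_of_left (H a t hint) _
    · exact mul_eq_zero_of_right _ (by rw [hV0 t ⟨subset_closure ht, hint⟩, Pi.zero_apply])

/-- For a smooth Lagrangian `L` on `T_mℝ^n`, a smooth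
`m`-curve `γ` and a closed box `C = [lo, hi]` with nonempty interior, `γ` is an
extremal over `C` (the first variation vanishes for every smooth variation
field `V` vanishing on `∂C`) if and only if the Euler–Lagrange expressions
`E_a(t) = L_{x^a}(j¹γ(t)) − Σ_i ∂_i(L_{u_i^a}(j¹γ(t)))` vanish for every `a`
and every `t` in the interior of `C`. Here `j¹γ(t) = (γ t, Dγ t)`. -/
theorem extremal_iff_euler_lagrange (m n : ℕ)
    (L : ((Fin n → ℝ) × ((Fin m → ℝ) →L[ℝ] (Fin n → ℝ))) → ℝ)
    (hL : ContDiff ℝ (⊤ : ℕ∞) L)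
    (γ : (Fin m → ℝ) → (Fin n → ℝ)) (hγ : ContDiff ℝ (⊤ : ℕ∞) γ)
    (lo hi : Fin m → ℝ) (hbox : ∀ i, lo i < hi i) :
    (∀ V : (Fin m → ℝ) → (Fin n → ℝ), ContDiff ℝ (⊤ : ℕ∞) V →
      (∀ t ∈ frontier (Set.Icc lo hi), V t = 0) →
      (∫ t in Set.Icc lo hi,
        ∑ a, (fderiv ℝ L (γ t, fderiv ℝ γ t) (Pi.single a 1, 0) * V t a +
          ∑ i, fderiv ℝ L (γ t, fderiv ℝ γ t) (0, fibreDir m n i a) *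
            fderiv ℝ V t (Pi.single i 1) a)) = 0)
    ↔
    (∀ (a : Fin n), ∀ t ∈ interior (Set.Icc lo hi),
      fderiv ℝ L (γ t, fderiv ℝ γ t) (Pi.single a 1, 0) -
        (∑ i, fderiv ℝ
          (fun s => fderiv ℝ L (γ s, fderiv ℝ γ s) (0, fibreDir m n i a)) t
          (Pi.single i 1)) = 0) :=
  extremal_iff_euler_lagrange_general m n L hL γ hγ lo hi
end
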